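/- Let n be a positive integer, d a nonnegative integer, and let a_1 < a_2 < \cdots < a_n and c_1 < c_2 < \cdots < c_n be nonnegative integers with a_i \le c_i for all i. Then det( gf1(a_i + d, c_j + d) )_{i,j=1}^n / det( gf1(a_i, c_j) )_{i,j=1}^n = \prod_{m=1}^n [ ( (q^{2d+2};q^2)_{c_m} / ( q^{d c_m} (q^2;q^2)_{c_m} ) ) * ( q^{d a_m} (q^2;q^2)_{a_m} / (q^{2d+2};q^2)_{a_m} ) ], assuming the denominator determinant is nonzero. -/

import Mathlib

/-!
For `c = a + k` the generating function factors as `(2q^a)^{-k} W_k (q^{2a+2}; q²)_k`, where `W_k`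
does not depend on `a`. Shifting both `a` and `c` by `d` therefore only changes the prefactor by
`q^{-dk}` and the Pochhammer symbol to `(q^{2a+2d+2}; q²)_k`, and this ratio splits as a factor
depending on `c` alone times a factor depending on `a` alone. So the shifted matrix is the original
one with rows and columns rescaled, and its determinant picks up the product of the scalars.
-/

/-- The field of rational functions in the three indeterminates `X`, `Y`, `q`. -/
noncomputable abbrev MyF : Type := FractionRing (MvPolynomial (Fin 3) ℚ)

/-- The indeterminate `X`. -/
noncomputable def Xv : MyF := algebraMap (MvPolynomial (Fin 3) ℚ) MyF (MvPolynomial.X 0)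
/-- The indeterminate `Y`. -/
noncomputable def Yv : MyF := algebraMap (MvPolynomial (Fin 3) ℚ) MyF (MvPolynomial.X 1)
/-- The indeterminate `q`. -/
noncomputable def qv : MyF := algebraMap (MvPolynomial (Fin 3) ℚ) MyF (MvPolynomial.X 2)

/-- `gf1(a,c) = (2q^a)^{a-c} ∏_{j=1}^{c-a} ((X q^{j-1} + Y q^{1-j})(1-q^{2a+2j}))/(1-q^{2j})`
for `c ≥ a`, and `0` otherwise (the generating function of weighted lattice paths from
`(a,a)` to `(c,0)` in the half-hexagon setup). -/
noncomputable def gfone (a c : ℕ) : MyF :=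
  if a ≤ c then
    (2 * qv ^ (a : ℤ)) ^ ((a : ℤ) - (c : ℤ)) *
      ∏ t ∈ Finset.range (c - a),
        ((Xv * qv ^ ((t : ℤ) + 1 - 1) + Yv * qv ^ (1 - ((t : ℤ) + 1))) *
            (1 - qv ^ (2 * (a : ℤ) + 2 * ((t : ℤ) + 1)))) /
          (1 - qv ^ (2 * ((t : ℤ) + 1)))
  else 0

/-- q-Pochhammer symbol `(a; q)_n = ∏_{j=0}^{n-1} (1 - a q^j)`. -/
noncomputable def qPoch (a q : MyF) (n : ℕ) : MyF :=
  ∏ j ∈ Finset.range n, (1 - a * q ^ j)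

open Finset

noncomputable def gfoneStepWeight (k : ℕ) : MyF :=
  ∏ t ∈ range k,
    (Xv * qv ^ ((t : ℤ) + 1 - 1) + Yv * qv ^ (1 - ((t : ℤ) + 1))) /
      (1 - qv ^ (2 * ((t : ℤ) + 1)))

noncomputable def shiftColFactor (d c : ℕ) : MyF :=
  qPoch (qv ^ (2 * d + 2)) (qv ^ 2) c / (qv ^ (d * c) * qPoch (qv ^ 2) (qv ^ 2) c)

noncomputable def shiftRowFactor (d a : ℕ) : MyF :=
  qv ^ (d * a) * qPoch (qv ^ 2) (qv ^ 2) a / qPoch (qv ^ (2 * d + 2)) (qv ^ 2) a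

lemma qv_ne_zero : qv ≠ 0 :=
  (map_ne_zero_iff _ (IsFractionRing.injective (MvPolynomial (Fin 3) ℚ) MyF)).mpr
    (MvPolynomial.X_ne_zero 2)

lemma one_sub_qv_pow_ne_zero {k : ℕ} (hk : 0 < k) : 1 - qv ^ k ≠ 0 := by
  intro h
  have hpoly : (MvPolynomial.X 2 : MvPolynomial (Fin 3) ℚ) ^ k = 1 := by
    apply IsFractionRing.injective (MvPolynomial (Fin 3) ℚ) MyF
    rw [map_pow, map_one]
    exact (sub_eq_zero.mp h).symm
  have h2 := congrArg (MvPolynomial.eval fun _ => (2 : ℚ)) hpoly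
  simp only [map_pow, MvPolynomial.eval_X, map_one] at h2
  exact (one_lt_pow₀ one_lt_two hk.ne').ne' h2

lemma qPoch_qv_ne_zero {m : ℕ} (hm : 0 < m) (n : ℕ) : qPoch (qv ^ m) (qv ^ 2) n ≠ 0 :=
  prod_ne_zero_iff.mpr fun j _ => by
    rw [← pow_mul, ← pow_add]
    exact one_sub_qv_pow_ne_zero (by omega)

lemma qPoch_add (x q : MyF) (m k : ℕ) :
    qPoch x q (m + k) = qPoch x q m * qPoch (x * q ^ m) q k := by
  simp only [qPoch, prod_range_add, mul_assoc, pow_add]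

lemma qPoch_qv_add (e a k : ℕ) :
    qPoch (qv ^ e) (qv ^ 2) (a + k)
      = qPoch (qv ^ e) (qv ^ 2) a * qPoch (qv ^ (e + 2 * a)) (qv ^ 2) k := by
  rw [qPoch_add, ← pow_mul, ← pow_add]

lemma gfone_of_lt {a c : ℕ} (h : c < a) : gfone a c = 0 :=
  if_neg (by omega)

lemma gfone_self_add (a k : ℕ) :
    gfone a (a + k)
      = (2 * qv ^ a)⁻¹ ^ k * gfoneStepWeight k * qPoch (qv ^ (2 * a + 2)) (qv ^ 2) k := by
  have hexp : ((a : ℤ) - ((a + k : ℕ) : ℤ)) = -(k : ℤ) := by push_cast; ring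
  rw [gfone, if_pos (by omega), Nat.add_sub_cancel_left, hexp, zpow_neg, zpow_natCast, zpow_natCast,
    inv_pow, gfoneStepWeight, qPoch, mul_assoc, ← prod_mul_distrib]
  congr 2 with t
  have hpow : qv ^ (2 * (a : ℤ) + 2 * ((t : ℤ) + 1)) = qv ^ (2 * a + 2) * (qv ^ 2) ^ t := by
    rw [← pow_mul, ← pow_add, ← zpow_natCast]
    push_cast
    ring_nf
  rw [hpow]
  ring

lemma shiftColFactor_add_mul_shiftRowFactor (d a k : ℕ) :
    shiftColFactor d (a + k) * shiftRowFactor d a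
      = (qv ^ (d * k))⁻¹ * qPoch (qv ^ (2 * (a + d) + 2)) (qv ^ 2) k /
          qPoch (qv ^ (2 * a + 2)) (qv ^ 2) k := by
  have hPa := qPoch_qv_ne_zero (m := 2) (by omega) a
  have hPda := qPoch_qv_ne_zero (m := 2 * d + 2) (by omega) a
  have hPk := qPoch_qv_ne_zero (m := 2 * a + 2) (by omega) k
  have hq := qv_ne_zero
  rw [shiftColFactor, shiftRowFactor, qPoch_qv_add, qPoch_qv_add,
    show 2 * d + 2 + 2 * a = 2 * (a + d) + 2 by ring, show 2 + 2 * a = 2 * a + 2 by ring]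
  field_simp
  ring

lemma gfone_add_add (d a c : ℕ) :
    gfone (a + d) (c + d) = shiftRowFactor d a * gfone a c * shiftColFactor d c := by
  rcases lt_or_ge c a with hca | hac
  · rw [gfone_of_lt hca, gfone_of_lt (by omega)]
    ring
  · obtain ⟨k, rfl⟩ := Nat.exists_eq_add_of_le hac
    have hPk := qPoch_qv_ne_zero (m := 2 * a + 2) (by omega) k
    calc gfone (a + d) (a + k + d)
        = shiftColFactor d (a + k) * shiftRowFactor d a * gfone a (a + k) := by
          rw [shiftColFactor_add_mul_shiftRowFactor, show a + k + d = a + d + k by ring,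
            gfone_self_add, gfone_self_add]
          field_simp
          ring
      _ = _ := by ring

lemma Matrix.det_of_mul_mul {n R : Type*} [Fintype n] [DecidableEq n] [CommRing R]
    (r s : n → R) (f : n → n → R) :
    (Matrix.of fun i j => r i * f i j * s j).det
      = (∏ i, r i) * (∏ j, s j) * (Matrix.of f).det := by
  have hrow := Matrix.det_mul_row s (Matrix.of fun i j => r i * f i j)
  have hcol := Matrix.det_mul_column r (Matrix.of f)
  simp only [Matrix.of_apply] at hrow hcol
  simp only [mul_comm _ (s _), hrow, hcol]
  ring

theorem det_gfone_quotient_general (n : ℕ) (d : ℕ) (a c : Fin n → ℕ)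
    (hdet : Matrix.det (Matrix.of fun i j => gfone (a i) (c j)) ≠ 0) :
    Matrix.det (Matrix.of fun i j => gfone (a i + d) (c j + d)) /
        Matrix.det (Matrix.of fun i j => gfone (a i) (c j))
      = ∏ m : Fin n,
          (qPoch (qv ^ (2 * d + 2)) (qv ^ 2) (c m) /
              (qv ^ (d * c m) * qPoch (qv ^ 2) (qv ^ 2) (c m))) *
            (qv ^ (d * a m) * qPoch (qv ^ 2) (qv ^ 2) (a m) /
              qPoch (qv ^ (2 * d + 2)) (qv ^ 2) (a m)) := by
  simp_rw [gfone_add_add d]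
  rw [Matrix.det_of_mul_mul (fun i => shiftRowFactor d (a i)) (fun j => shiftColFactor d (c j))
    fun i j => gfone (a i) (c j), mul_div_assoc, div_self hdet, mul_one, mul_comm,
    ← prod_mul_distrib]
  rfl

/-- Lai's observation for half hexagons: for `a_1 < ⋯ < a_n`, `c_1 < ⋯ < c_n`
with `a_i ≤ c_i`, the quotient of the two `n × n` determinants
`det(gf1(a_i+d, c_j+d)) / det(gf1(a_i, c_j))` equals
`∏_{m=1}^n ((q^{2d+2};q²)_{c_m} / (q^{d c_m} (q²;q²)_{c_m})) ⬝
(q^{d a_m} (q²;q²)_{a_m} / (q^{2d+2};q²)_{a_m})`,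
provided the denominator determinant is nonzero. -/
theorem det_gfone_quotient (n : ℕ) (hn : 0 < n) (d : ℕ) (a c : Fin n → ℕ)
    (ha : StrictMono a) (hc : StrictMono c) (hac : ∀ i, a i ≤ c i)
    (hdet : Matrix.det (Matrix.of fun i j => gfone (a i) (c j)) ≠ 0) :
    Matrix.det (Matrix.of fun i j => gfone (a i + d) (c j + d)) /
        Matrix.det (Matrix.of fun i j => gfone (a i) (c j))
      = ∏ m : Fin n,
          (qPoch (qv ^ (2 * d + 2)) (qv ^ 2) (c m) /
              (qv ^ (d * c m) * qPoch (qv ^ 2) (qv ^ 2) (c m))) *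
            (qv ^ (d * a m) * qPoch (qv ^ 2) (qv ^ 2) (a m) /
              qPoch (qv ^ (2 * d + 2)) (qv ^ 2) (a m)) :=
  det_gfone_quotient_general n d a c hdet
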